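/- Let ψ ∈ C²(ℝ^d) satisfy sup_x (|ψ(x)| + |∇ψ(x)| + |D²ψ(x)|)/W(x) < ∞. Then ψ ∈ I_+^W if and only if there exists λ > 0 such that for all x, y ∈ ℝ^d: Δψ(x) + Δψ(y) − ⟨K(x,y), ∇ψ(x)⟩ − ⟨K(y,x), ∇ψ(y)⟩ = λ(ψ(x) + ψ(y)). In particular, if ψ ∈ I_+^W with associated λ(ψ), then Δψ(x) − ⟨K(x,x), ∇ψ(x)⟩ = λ(ψ)ψ(x) for all x. -/

import Mathlib

open MeasureTheory Real Set Filter Metric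
open scoped Topology RealInnerProductSpace NNReal ENNReal

noncomputable section

abbrev Ed (d : ℕ) : Type := EuclideanSpace ℝ (Fin d)

variable {d : ℕ}

/-- Second-order partial derivative `∂_i ∂_j φ (x)`. -/
def hess2 (φ : Ed d → ℝ) (x : Ed d) (i j : Fin d) : ℝ :=
  iteratedFDeriv ℝ 2 φ x ![EuclideanSpace.single i 1, EuclideanSpace.single j 1]

/-- The Laplacian. -/
def lap (φ : Ed d → ℝ) (x : Ed d) : ℝ := ∑ i, hess2 φ x i i

/-- The Kolmogorov operator with unit diffusion: `L φ = Δφ + ⟨B, ∇φ⟩`. -/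
def LopI (B : Ed d → Ed d) (φ : Ed d → ℝ) (x : Ed d) : ℝ :=
  lap φ x + ⟪B x, gradient φ x⟫

/-- Membership in `𝒫_V(ℝ^d)`. -/
def memPV (V : Ed d → ℝ) (μ : Measure (Ed d)) : Prop :=
  IsProbabilityMeasure μ ∧ Integrable V μ

/-- Growth bound defining the class of admissible `ψ`. -/
def GrowthW (W ψ : Ed d → ℝ) : Prop :=
  ∃ M : ℝ, ∀ x, |ψ x| + ‖gradient ψ x‖ + ‖iteratedFDeriv ℝ 2 ψ x‖ ≤ M * W x

/-- The convolution drift `b(x,μ) = -∫ K(x,y) μ(dy)`. -/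
def bConv (K : Ed d → Ed d → Ed d) (μ : Measure (Ed d)) (x : Ed d) : Ed d :=
  -∫ y, K x y ∂μ

/-- The class `I_+^W` for the drift `b(x,μ) = -∫ K(x,y) μ(dy)` and `A = I`. -/
def IplusWconv (K : Ed d → Ed d → Ed d) (V W : Ed d → ℝ) (ψ : Ed d → ℝ) : Prop :=
  ContDiff ℝ 2 ψ ∧ GrowthW W ψ ∧
    ∃ lam > (0:ℝ), ∀ μ : Measure (Ed d), memPV V μ →
      ∫ x, LopI (bConv K μ) ψ x ∂μ = lam * ∫ x, ψ x ∂μ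

/-! Testing the relation against `δ_x` and against `(δ_x + δ_y)/2` forces the pointwise identity.
Conversely, for `μ ∈ 𝒫_V`, `∫ L_μ ψ dμ - λ ∫ ψ dμ` is the integral over `μ ⊗ μ` of the defect
`F(x,y) = Δψ(x) - ⟨K(x,y), ∇ψ(x)⟩ - λψ(x)`, which is integrable because `|F(x,y)| ≲ V(x)`: the
exponents `1 - γ` of `K` and `γ` of `∇ψ` add up to one. The pointwise identity says exactly that
`F` is antisymmetric under `(x,y) ↦ (y,x)`, and `μ ⊗ μ` is invariant under this swap, so the
integral vanishes. -/

section TwoPointMeasure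

variable {α : Type*} [MeasurableSpace α] [MeasurableSingletonClass α]
  {E : Type*} [NormedAddCommGroup E]

def diracMidpoint (x y : α) : Measure α := (2 : ℝ≥0∞)⁻¹ • (Measure.dirac x + Measure.dirac y)

instance (x y : α) : IsProbabilityMeasure (diracMidpoint x y) :=
  ⟨by simp [diracMidpoint, ENNReal.inv_two_add_inv_two]⟩

lemma integrable_diracMidpoint (f : α → E) (x y : α) : Integrable f (diracMidpoint x y) :=
  ((integrable_dirac enorm_lt_top).add_measure (integrable_dirac enorm_lt_top)).smul_measure
    (by norm_num)

lemma integral_diracMidpoint [NormedSpace ℝ E] [CompleteSpace E] (f : α → E) (x y : α) :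
    ∫ z, f z ∂diracMidpoint x y = (2⁻¹ : ℝ) • (f x + f y) := by
  rw [diracMidpoint, integral_smul_measure, integral_add_measure (integrable_dirac enorm_lt_top)
    (integrable_dirac enorm_lt_top), integral_dirac, integral_dirac]
  norm_num

end TwoPointMeasure

lemma integral_prod_self_eq_zero_of_swap_eq_neg {α : Type*} [MeasurableSpace α] (μ : Measure α)
    [SFinite μ] {f : α × α → ℝ} (hf : ∀ p, f p.swap = -f p) : ∫ p, f p ∂μ.prod μ = 0 := by
  have h : ∫ p, f p ∂μ.prod μ = -∫ p, f p ∂μ.prod μ := by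
    rw [← integral_neg, ← integral_prod_swap]
    simp only [hf]
  linarith

lemma memPV_dirac (V : Ed d → ℝ) (x : Ed d) : memPV V (Measure.dirac x) :=
  ⟨inferInstance, integrable_dirac enorm_lt_top⟩

lemma memPV_diracMidpoint (V : Ed d → ℝ) (x y : Ed d) : memPV V (diracMidpoint x y) :=
  ⟨inferInstance, integrable_diracMidpoint V x y⟩

def pairDefect (K : Ed d → Ed d → Ed d) (ψ : Ed d → ℝ) (lam : ℝ) (p : Ed d × Ed d) : ℝ :=
  lap ψ p.1 - ⟪K p.1 p.2, gradient ψ p.1⟫ - lam * ψ p.1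

lemma pairDefect_add_swap_eq_zero_iff {K : Ed d → Ed d → Ed d} {ψ : Ed d → ℝ} {lam : ℝ}
    {x y : Ed d} : pairDefect K ψ lam (x, y) + pairDefect K ψ lam (y, x) = 0 ↔
      lap ψ x + lap ψ y - ⟪K x y, gradient ψ x⟫ - ⟪K y x, gradient ψ y⟫ = lam * (ψ x + ψ y) := by
  simp only [pairDefect]
  constructor <;> intro h <;> linarith

section Necessity

variable (K : Ed d → Ed d → Ed d) (ψ : Ed d → ℝ) (lam : ℝ)

lemma integral_LopI_bConv_dirac (x : Ed d) :
    ∫ z, LopI (bConv K (Measure.dirac x)) ψ z ∂Measure.dirac x - lam * ∫ z, ψ z ∂Measure.dirac x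
      = pairDefect K ψ lam (x, x) := by
  simp only [LopI, bConv, integral_dirac, inner_neg_left, pairDefect]
  ring

lemma integral_LopI_bConv_diracMidpoint (x y : Ed d) :
    ∫ z, LopI (bConv K (diracMidpoint x y)) ψ z ∂diracMidpoint x y
        - lam * ∫ z, ψ z ∂diracMidpoint x y
      = 4⁻¹ * (pairDefect K ψ lam (x, x) + pairDefect K ψ lam (x, y)
          + pairDefect K ψ lam (y, x) + pairDefect K ψ lam (y, y)) := by
  simp only [LopI, bConv, integral_diracMidpoint, inner_neg_left, real_inner_smul_left,
    inner_add_left, smul_eq_mul, pairDefect]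
  ring

variable {K ψ lam} {V : Ed d → ℝ}

lemma pairDefect_diag_eq_zero_of_forall_memPV
    (hrel : ∀ μ, memPV V μ → ∫ x, LopI (bConv K μ) ψ x ∂μ = lam * ∫ x, ψ x ∂μ) (x : Ed d) :
    pairDefect K ψ lam (x, x) = 0 := by
  rw [← integral_LopI_bConv_dirac, hrel _ (memPV_dirac V x), sub_self]

lemma pairDefect_add_swap_eq_zero_of_forall_memPV
    (hrel : ∀ μ, memPV V μ → ∫ x, LopI (bConv K μ) ψ x ∂μ = lam * ∫ x, ψ x ∂μ) (x y : Ed d) :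
    pairDefect K ψ lam (x, y) + pairDefect K ψ lam (y, x) = 0 := by
  have h := integral_LopI_bConv_diracMidpoint K ψ lam x y
  rw [hrel _ (memPV_diracMidpoint V x y), sub_self,
    pairDefect_diag_eq_zero_of_forall_memPV hrel x,
    pairDefect_diag_eq_zero_of_forall_memPV hrel y] at h
  linarith

end Necessity

lemma ContDiff.continuous_gradient {𝕜 F : Type*} [RCLike 𝕜] [NormedAddCommGroup F]
    [InnerProductSpace 𝕜 F] [CompleteSpace F] {f : F → 𝕜} (hf : ContDiff 𝕜 1 f) :
    Continuous (gradient f) :=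
  (InnerProductSpace.toDual 𝕜 F).symm.continuous.comp (hf.continuous_fderiv one_ne_zero)

lemma ContDiff.continuous_lap {ψ : Ed d → ℝ} (hψ : ContDiff ℝ 2 ψ) : Continuous (lap ψ) :=
  continuous_finsetSum _ fun _ _ => (hψ.continuous_iteratedFDeriv le_rfl).eval continuous_const

lemma abs_hess2_le (ψ : Ed d → ℝ) (x : Ed d) (i j : Fin d) :
    |hess2 ψ x i j| ≤ ‖iteratedFDeriv ℝ 2 ψ x‖ := by
  simpa [hess2, Fin.prod_univ_two, PiLp.norm_single] using
    (iteratedFDeriv ℝ 2 ψ x).le_opNorm ![EuclideanSpace.single i 1, EuclideanSpace.single j 1]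

lemma abs_lap_le (ψ : Ed d → ℝ) (x : Ed d) : |lap ψ x| ≤ d * ‖iteratedFDeriv ℝ 2 ψ x‖ :=
  calc |lap ψ x| ≤ ∑ i, |hess2 ψ x i i| := Finset.abs_sum_le_sum_abs _ _
    _ ≤ ∑ _i : Fin d, ‖iteratedFDeriv ℝ 2 ψ x‖ := Finset.sum_le_sum fun i _ => abs_hess2_le ψ x i i
    _ = d * ‖iteratedFDeriv ℝ 2 ψ x‖ := by simp

lemma le_mul_of_le_mul_rpow {a M v γ : ℝ} (ha : 0 ≤ a) (hv : 1 ≤ v) (hγ : γ ≤ 1)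
    (h : a ≤ M * v ^ γ) : a ≤ M * v := by
  have hvγ : 0 < v ^ γ := rpow_pos_of_pos (one_pos.trans_le hv) γ
  have hM : 0 ≤ M := nonneg_of_mul_nonneg_left (ha.trans h) hvγ
  exact h.trans (mul_le_mul_of_nonneg_left (by simpa using rpow_le_rpow_of_exponent_le hv hγ) hM)

section Sufficiency

variable {K : Ed d → Ed d → Ed d} {ψ : Ed d → ℝ} {lam : ℝ}

lemma measurable_pairDefect (hKmeas : Measurable fun p : Ed d × Ed d => K p.1 p.2)
    (hψ : ContDiff ℝ 2 ψ) : Measurable (pairDefect K ψ lam) :=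
  ((hψ.continuous_lap.measurable.comp measurable_fst).sub
    (hKmeas.inner ((hψ.of_le one_le_two).continuous_gradient.measurable.comp measurable_fst))).sub
    (measurable_const.mul (hψ.continuous.measurable.comp measurable_fst))

variable {V : Ed d → ℝ} {γ CK M : ℝ}

lemma abs_pairDefect_le (hV1 : ∀ x, 1 ≤ V x) (hγ : γ ≤ 1)
    (hKgrow : ∀ x y, ‖K x y‖ ≤ CK * V x ^ (1 - γ))
    (hM : ∀ x, |ψ x| + ‖gradient ψ x‖ + ‖iteratedFDeriv ℝ 2 ψ x‖ ≤ M * V x ^ γ)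
    (x y : Ed d) : |pairDefect K ψ lam (x, y)| ≤ ((d + CK + |lam|) * M) * V x := by
  have hψ0 := abs_nonneg (ψ x)
  have hD1 := norm_nonneg (gradient ψ x)
  have hD2 := norm_nonneg (iteratedFDeriv ℝ 2 ψ x)
  have hψ : |ψ x| ≤ M * V x := le_mul_of_le_mul_rpow hψ0 (hV1 x) hγ (by linarith [hM x])
  have hlap : |lap ψ x| ≤ d * (M * V x) := (abs_lap_le ψ x).trans <| by
    gcongr; exact le_mul_of_le_mul_rpow hD2 (hV1 x) hγ (by linarith [hM x])
  have hK : |⟪K x y, gradient ψ x⟫| ≤ CK * M * V x :=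
    calc |⟪K x y, gradient ψ x⟫| ≤ ‖K x y‖ * ‖gradient ψ x‖ := abs_real_inner_le_norm _ _
      _ ≤ (CK * V x ^ (1 - γ)) * (M * V x ^ γ) :=
          mul_le_mul (hKgrow x y) (by linarith [hM x]) hD1 ((norm_nonneg _).trans (hKgrow x y))
      _ = CK * M * V x := by
          rw [mul_mul_mul_comm, ← rpow_add (one_pos.trans_le (hV1 x)), sub_add_cancel, rpow_one]
  calc |pairDefect K ψ lam (x, y)|
      ≤ |lap ψ x| + |⟪K x y, gradient ψ x⟫| + |lam| * |ψ x| := by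
        rw [← abs_mul]; exact (abs_sub _ _).trans (by gcongr; exact abs_sub _ _)
    _ ≤ d * (M * V x) + CK * M * V x + |lam| * (M * V x) := by gcongr
    _ = ((d + CK + |lam|) * M) * V x := by ring

lemma integral_pairDefect_right (μ : Measure (Ed d)) [IsProbabilityMeasure μ] {x : Ed d}
    (hKint : Integrable (K x) μ) :
    ∫ y, pairDefect K ψ lam (x, y) ∂μ = LopI (bConv K μ) ψ x - lam * ψ x := by
  have hinner : ∫ y, ⟪K x y, gradient ψ x⟫ ∂μ = ⟪∫ y, K x y ∂μ, gradient ψ x⟫ := by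
    simp_rw [real_inner_comm (gradient ψ x)]
    exact integral_inner hKint _
  simp only [pairDefect]
  rw [integral_sub (by fun_prop) (integrable_const _), integral_sub (integrable_const _)
    (hKint.inner_const _), integral_const, integral_const, hinner]
  simp only [probReal_univ, one_smul, LopI, bConv, inner_neg_left]
  ring

lemma integral_LopI_bConv_eq_of_pairDefect_add_swap (hV1 : ∀ x, 1 ≤ V x) (hγ : γ ≤ 1)
    (hKmeas : Measurable fun p : Ed d × Ed d => K p.1 p.2)
    (hKgrow : ∀ x y, ‖K x y‖ ≤ CK * V x ^ (1 - γ)) (hψ : ContDiff ℝ 2 ψ)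
    (hM : ∀ x, |ψ x| + ‖gradient ψ x‖ + ‖iteratedFDeriv ℝ 2 ψ x‖ ≤ M * V x ^ γ)
    (hswap : ∀ x y, pairDefect K ψ lam (x, y) + pairDefect K ψ lam (y, x) = 0)
    {μ : Measure (Ed d)} (hμ : memPV V μ) :
    ∫ x, LopI (bConv K μ) ψ x ∂μ = lam * ∫ x, ψ x ∂μ := by
  obtain ⟨hprob, hVint⟩ := hμ
  have hF : Integrable (pairDefect K ψ lam) (μ.prod μ) :=
    ((hVint.comp_fst μ).const_mul _).mono' (measurable_pairDefect hKmeas hψ).aestronglyMeasurable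
      (ae_of_all _ fun p => abs_pairDefect_le hV1 hγ hKgrow hM p.1 p.2)
  have hKint (x : Ed d) : Integrable (K x) μ :=
    (integrable_const _).mono' (hKmeas.comp measurable_prodMk_left).aestronglyMeasurable
      (ae_of_all _ (hKgrow x))
  have hψint : Integrable ψ μ :=
    (hVint.const_mul M).mono' hψ.continuous.aestronglyMeasurable (ae_of_all _ fun x =>
      le_mul_of_le_mul_rpow (norm_nonneg _) (hV1 x) hγ
        (by rw [Real.norm_eq_abs]
            linarith [hM x, norm_nonneg (gradient ψ x), norm_nonneg (iteratedFDeriv ℝ 2 ψ x)]))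
  calc ∫ x, LopI (bConv K μ) ψ x ∂μ
      = ∫ x, (∫ y, pairDefect K ψ lam (x, y) ∂μ + lam * ψ x) ∂μ := by
        simp only [integral_pairDefect_right μ (hKint _), sub_add_cancel]
    _ = ∫ p, pairDefect K ψ lam p ∂μ.prod μ + lam * ∫ x, ψ x ∂μ := by
        rw [integral_add hF.integral_prod_left (hψint.const_mul lam), integral_const_mul,
          integral_prod _ hF]
    _ = lam * ∫ x, ψ x ∂μ := by
        rw [integral_prod_self_eq_zero_of_swap_eq_neg μ
          fun p => eq_neg_of_add_eq_zero_right (hswap p.1 p.2), zero_add]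

end Sufficiency

theorem stmt7_IplusW_characterization_general
    (V : Ed d → ℝ) (hV1 : ∀ x, 1 ≤ V x)
    (γ : ℝ) (hγ : γ ∈ Set.Ioc (0:ℝ) (1/2))
    (W : Ed d → ℝ) (hW : W = fun x => V x ^ γ)
    (K : Ed d → Ed d → Ed d)
    (hKmeas : Measurable fun p : Ed d × Ed d => K p.1 p.2)
    (CK : ℝ) (hKgrow : ∀ x y, ‖K x y‖ ≤ CK * V x ^ (1 - γ))
    (ψ : Ed d → ℝ) (hψC2 : ContDiff ℝ 2 ψ) (hψgrow : GrowthW W ψ) :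
    -- the equivalence
    (IplusWconv K V W ψ ↔
      ∃ lam > (0:ℝ), ∀ x y : Ed d,
        lap ψ x + lap ψ y - ⟪K x y, gradient ψ x⟫ - ⟪K y x, gradient ψ y⟫
          = lam * (ψ x + ψ y))
    ∧
    -- "in particular", for the associated λ(ψ)
    (∀ lam : ℝ, 0 < lam →
      (∀ μ : Measure (Ed d), memPV V μ →
        ∫ x, LopI (bConv K μ) ψ x ∂μ = lam * ∫ x, ψ x ∂μ) →
      ∀ x, lap ψ x - ⟪K x x, gradient ψ x⟫ = lam * ψ x) := by
  subst hW
  have hγ1 : γ ≤ 1 := hγ.2.trans (by norm_num)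
  refine ⟨⟨?_, ?_⟩, fun lam _ hrel x =>
    sub_eq_zero.mp (pairDefect_diag_eq_zero_of_forall_memPV hrel x)⟩
  · rintro ⟨-, -, lam, hlam, hrel⟩
    exact ⟨lam, hlam, fun x y => pairDefect_add_swap_eq_zero_iff.mp
      (pairDefect_add_swap_eq_zero_of_forall_memPV hrel x y)⟩
  · rintro ⟨lam, hlam, hpair⟩
    exact ⟨hψC2, hψgrow, lam, hlam, fun μ hμ => integral_LopI_bConv_eq_of_pairDefect_add_swap
      hV1 hγ1 hKmeas hKgrow hψC2 hψgrow.choose_spec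
      (fun x y => pairDefect_add_swap_eq_zero_iff.mpr (hpair x y)) hμ⟩

/-- **Proposition 4**: characterization of `I_+^W` for convolution drifts. -/
theorem stmt7_IplusW_characterization
    (V : Ed d → ℝ) (hV : ContDiff ℝ 2 V) (hV1 : ∀ x, 1 ≤ V x)
    (hVinf : Tendsto V (cocompact (Ed d)) atTop)
    (γ : ℝ) (hγ : γ ∈ Set.Ioc (0:ℝ) (1/2))
    (W : Ed d → ℝ) (hW : W = fun x => V x ^ γ)
    (K : Ed d → Ed d → Ed d)
    (hKmeas : Measurable fun p : Ed d × Ed d => K p.1 p.2)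
    (CK : ℝ) (hKgrow : ∀ x y, ‖K x y‖ ≤ CK * V x ^ (1 - γ))
    (ψ : Ed d → ℝ) (hψC2 : ContDiff ℝ 2 ψ) (hψgrow : GrowthW W ψ) :
    -- the equivalence
    (IplusWconv K V W ψ ↔
      ∃ lam > (0:ℝ), ∀ x y : Ed d,
        lap ψ x + lap ψ y - ⟪K x y, gradient ψ x⟫ - ⟪K y x, gradient ψ y⟫
          = lam * (ψ x + ψ y))
    ∧
    -- "in particular", for the associated λ(ψ)
    (∀ lam : ℝ, 0 < lam →
      (∀ μ : Measure (Ed d), memPV V μ →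
        ∫ x, LopI (bConv K μ) ψ x ∂μ = lam * ∫ x, ψ x ∂μ) →
      ∀ x, lap ψ x - ⟪K x x, gradient ψ x⟫ = lam * ψ x) :=
  stmt7_IplusW_characterization_general V hV1 γ hγ W hW K hKmeas CK hKgrow ψ hψC2 hψgrow
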